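/- Let D be the minimal diagram of a weaving link W(p,q). Then the isolate-region number I(D) satisfies I(D) ≥ (p-1)q/4 if q ≡ 0 (mod 4); I(D) ≥ (p-1)(q-1)/4 if q ≡ 1 (mod 4); I(D) ≥ (p-1)(q-2)/4 + ⌊(p+2)/4⌋ if q ≡ 2 (mod 4); and I(D) ≥ (p-1)(q-3)/4 + ⌊(p+2)/4⌋ + ⌊(p+1)/4⌋ if q ≡ 3 (mod 4). -/

import Mathlib

namespace Weaving

/-- A braid letter: 0-based generator index `k` (representing `σ_{k+1}`) and a sign
(`true` = positive crossing). -/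
abbrev Letter := ℕ × Bool

/-- A braid diagram (word). Letters are read from top to bottom. -/
abbrev Word := List Letter

/-- Wellformedness of a word as a braid on `p` strands. -/
def WF (p : ℕ) (w : Word) : Prop := ∀ l ∈ w, l.1 + 2 ≤ p

/-- One round `σ_1 σ_2^{-1} σ_3 ⋯ σ_{p-1}^{(-1)^p}` of the weaving braid on `p` strands. -/
def wRound (p : ℕ) : Word := (List.range (p - 1)).map fun k => (k, decide (k % 2 = 0))

/-- The weaving braid word `B_W(p,q) = (σ_1 σ_2^{-1} ⋯ σ_{p-1}^{(-1)^p})^q`. -/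
def wWord (p q : ℕ) : Word := (List.replicate q (wRound p)).flatten

/-- The transposition of strand positions effected by one letter. -/
def letterPerm (l : Letter) : Equiv.Perm ℕ := Equiv.swap l.1 (l.1 + 1)

/-- The permutation of a braid word: sends the top position of a strand to its
bottom position. -/
def permOfWord (w : Word) : Equiv.Perm ℕ := ((w.map letterPerm).reverse).prod

/-- The position permutation just before the `n`-th crossing (0-based). -/
def permUpTo (w : Word) (n : ℕ) : Equiv.Perm ℕ := permOfWord (w.take n)

/-- The label (top position) of the strand passing over at crossing `n`.
(Convention: at a positive letter `σ_k`, the strand at position `k` passes over.) -/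
def overLabel (w : Word) (n : ℕ) : ℕ :=
  let l := w.getD n (0, true)
  (permUpTo w n)⁻¹ (if l.2 then l.1 else l.1 + 1)

/-- The label of the strand passing under at crossing `n`. -/
def underLabel (w : Word) (n : ℕ) : ℕ :=
  let l := w.getD n (0, true)
  (permUpTo w n)⁻¹ (if l.2 then l.1 + 1 else l.1)

/-- The number of warping crossing points of the braid diagram `w` with respect to a
priority (ordering of base points) `r` on the strand labels: a crossing is warping
if the strand whose base point comes earlier passes under. -/
def warpCount (w : Word) (r : ℕ → ℕ) : ℕ :=
  ((List.range w.length).filter fun n =>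
    decide (r (underLabel w n) < r (overLabel w n))).length

/-- The warping degree of a braid diagram: the minimum of `warpCount` over all
orderings of the base points at the tops of the strands. -/
noncomputable def warpingDegree (w : Word) : ℕ :=
  sInf { m | ∃ r : ℕ → ℕ, Function.Injective r ∧ warpCount w r = m }

/-- A sequence of base points (a list enumerating the strands `0,…,p-1`) follows the
closure if, whenever the closure-successor of the current strand has not yet appeared,
it is the next base point. -/
def FollowsClosure (p : ℕ) (w : Word) (bs : List ℕ) : Prop :=
  bs.Perm (List.range p) ∧ ∀ m, m + 1 < bs.length →
    permOfWord w (bs.getD m 0) ∉ bs.take (m + 1) →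
    bs.getD (m + 1) 0 = permOfWord w (bs.getD m 0)

/-- The closed warping degree of a braid diagram. -/
noncomputable def closedWarpingDegree (p : ℕ) (w : Word) : ℕ :=
  sInf { m | ∃ bs : List ℕ, FollowsClosure p w bs ∧
    warpCount w (fun a => List.idxOf a bs) = m }

/-- The strands of the closure component of strand `i`, in traversal order. -/
def strandCycle (w : Word) (p i : ℕ) : List ℕ :=
  ((List.range p).map fun t => ((permOfWord w)^[t]) i).dedup

/-- The crossings met by strand `i` from top to bottom, with a flag recording whether
the strand passes under there. -/
def strandPassages (w : Word) (i : ℕ) : List (ℕ × Bool) :=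
  ((List.range w.length).filter fun n =>
    (overLabel w n == i) || (underLabel w n == i)).map
    fun n => (n, underLabel w n == i)

/-- All the crossing passages of the closure component of strand `i`, in the cyclic
order in which they are traversed starting from the top of strand `i`. -/
def compPassages (w : Word) (p i : ℕ) : List (ℕ × Bool) :=
  (strandCycle w p i).flatMap (strandPassages w)

/-- `starts` contains exactly one strand representative on each closure component. -/
def ValidStarts (p : ℕ) (w : Word) (starts : List ℕ) : Prop :=
  ∀ i < p, ∃! s, s ∈ starts ∧ i ∈ strandCycle w p s

/-- The passage sequence of the whole closure diagram determined by a choice of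
base points: component representatives `starts` and rotations `ts` (positions of the
base points along the components). -/
def fullTraversal (w : Word) (p : ℕ) (starts ts : List ℕ) : List (ℕ × Bool) :=
  ((starts.zip ts).map fun st => (compPassages w p st.1).rotate st.2).flatten

/-- Same, for the reversed orientation of the closure. -/
def fullTraversalRev (w : Word) (p : ℕ) (starts ts : List ℕ) : List (ℕ × Bool) :=
  ((starts.zip ts).map fun st => ((compPassages w p st.1).reverse).rotate st.2).flatten

/-- Crossing `n` is a warping crossing point of the traversal `T` if it is first met
as an under-crossing. -/
def warpInTraversal (T : List (ℕ × Bool)) (n : ℕ) : Bool :=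
  ((T.filter fun x => x.1 == n).headD (0, false)).2

def traversalWarpCount (w : Word) (T : List (ℕ × Bool)) : ℕ :=
  ((List.range w.length).filter fun n => warpInTraversal T n).length

/-- The warping degree of the closure diagram of `w` (with the braid orientation):
the minimum number of warping crossing points over all choices of base points. -/
noncomputable def closureWarpingDegree (p : ℕ) (w : Word) : ℕ :=
  sInf { m | ∃ starts ts : List ℕ, ValidStarts p w starts ∧ ts.length = starts.length ∧
    traversalWarpCount w (fullTraversal w p starts ts) = m }

/-- The warping degree of the closure diagram of `w` with reversed orientation. -/
noncomputable def closureWarpingDegreeRev (p : ℕ) (w : Word) : ℕ :=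
  sInf { m | ∃ starts ts : List ℕ, ValidStarts p w starts ∧ ts.length = starts.length ∧
    traversalWarpCount w (fullTraversalRev w p starts ts) = m }

/-- Relations of the braid group on `p` strands (generators `0,…,p-2`). -/
def braidRels (p : ℕ) : Set (FreeGroup (Fin (p - 1))) :=
  { r | (∃ i j : Fin (p - 1), (i : ℕ) + 1 = (j : ℕ) ∧
          r = FreeGroup.of i * FreeGroup.of j * FreeGroup.of i *
              (FreeGroup.of j * FreeGroup.of i * FreeGroup.of j)⁻¹) ∨
        (∃ i j : Fin (p - 1), (i : ℕ) + 2 ≤ (j : ℕ) ∧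
          r = FreeGroup.of i * FreeGroup.of j * (FreeGroup.of j * FreeGroup.of i)⁻¹) }

/-- The braid group on `p` strands. -/
abbrev BraidGroup (p : ℕ) := PresentedGroup (braidRels p)

def letterToBraid (p : ℕ) (l : Letter) : BraidGroup p :=
  if h : l.1 < p - 1 then
    (if l.2 then PresentedGroup.of ⟨l.1, h⟩ else (PresentedGroup.of ⟨l.1, h⟩)⁻¹)
  else 1

/-- The element of the braid group represented by a word. -/
def toBraid (p : ℕ) (w : Word) : BraidGroup p := (w.map (letterToBraid p)).prod

/-- Markov moves on closed braid diagrams: braid-group equality, conjugation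
(cyclic permutation), and (de)stabilization. -/
inductive MarkovStep : ℕ × Word → ℕ × Word → Prop
  | braid (p : ℕ) (w w' : Word) : WF p w → WF p w' → toBraid p w = toBraid p w' →
      MarkovStep (p, w) (p, w')
  | conj (p : ℕ) (w₁ w₂ : Word) : WF p (w₁ ++ w₂) → MarkovStep (p, w₁ ++ w₂) (p, w₂ ++ w₁)
  | stab (p : ℕ) (w : Word) (b : Bool) : WF p w → 1 ≤ p →
      MarkovStep (p, w) (p + 1, w ++ [(p - 1, b)])

/-- Two closed braid diagrams represent the same link iff they are Markov equivalent. -/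
def MarkovEquiv : ℕ × Word → ℕ × Word → Prop := Relation.EqvGen MarkovStep

/-- The closure of `(p, w)` represents a trivial link (an unlink). -/
def IsTrivialClosure (p : ℕ) (w : Word) : Prop := ∃ r : ℕ, MarkovEquiv (p, w) (r, [])

/-- The canonical representative (minimum label) of the closure component of strand `i`. -/
def orbitMin (w : Word) (p i : ℕ) : ℕ := (strandCycle w p i).foldr min i

/-- The number of components of the closure of `(p, w)`. -/
def numComponents (p : ℕ) (w : Word) : ℕ := ((Finset.range p).image (orbitMin w p)).card

/-- The closure of `(p, w)` is the unknot. -/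
def IsUnknot (p : ℕ) (w : Word) : Prop := IsTrivialClosure p w ∧ numComponents p w = 1

/-- Apply crossing changes at the set `S` of crossing indices. -/
def flipAt (w : Word) (S : Finset ℕ) : Word :=
  w.zipIdx.map fun ln => if ln.2 ∈ S then (ln.1.1, !ln.1.2) else ln.1

/-- `u(B)`: the minimum number of crossing changes on the braid diagram `w` making its
closure a trivial link. -/
noncomputable def braidUnknottingNumber (p : ℕ) (w : Word) : ℕ :=
  sInf { m | ∃ S : Finset ℕ, S ⊆ Finset.range w.length ∧ S.card = m ∧
    IsTrivialClosure p (flipAt w S) }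

/-- The unknotting (unlinking) number of the link represented by the closure of
`(p, w)`: the minimum number of crossing changes over all diagrams of the link. -/
noncomputable def linkUnknottingNumber (p : ℕ) (w : Word) : ℕ :=
  sInf { m | ∃ p' w', MarkovEquiv (p, w) (p', w') ∧
    ∃ S : Finset ℕ, S ⊆ Finset.range w'.length ∧ S.card = m ∧
      IsTrivialClosure p' (flipAt w' S) }

/-- The sign of crossing `n` (all strands oriented downwards). -/
def crossingSign (w : Word) (n : ℕ) : ℤ := if (w.getD n (0, true)).2 then 1 else -1

/-- The linking number of the closure components of strands `i` and `j` (assumed to lie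
on distinct components): half the signed count of their mutual crossings. -/
def lk (w : Word) (i j : ℕ) : ℤ :=
  (∑ n ∈ Finset.range w.length,
    if (overLabel w n = i ∧ underLabel w n = j) ∨ (overLabel w n = j ∧ underLabel w n = i)
    then crossingSign w n else 0) / 2

/-- The linking number between the closure components represented by `a` and `b`. -/
def compLk (p : ℕ) (w : Word) (a b : ℕ) : ℤ :=
  (∑ n ∈ Finset.range w.length,
    if (orbitMin w p (overLabel w n) = a ∧ orbitMin w p (underLabel w n) = b) ∨
       (orbitMin w p (overLabel w n) = b ∧ orbitMin w p (underLabel w n) = a)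
    then crossingSign w n else 0) / 2

/-- A link is proper if the total linking number of each component with all the
others is even. -/
def IsProper (p : ℕ) (w : Word) : Prop :=
  ∀ a ∈ (Finset.range p).image (orbitMin w p),
    (2 : ℤ) ∣ ∑ b ∈ ((Finset.range p).image (orbitMin w p)).erase a, compLk p w a b

/-- The closure of `(p, w)` is a split link. -/
def IsSplit (p : ℕ) (w : Word) : Prop :=
  ∃ p' w', MarkovEquiv (p, w) (p', w') ∧ WF p' w' ∧
    ∃ k, k + 1 < p' ∧ ∀ l ∈ w', l.1 ≠ k

/-- The connected sum diagram of the closures of a braid on `a` strands and a braid on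
`b` strands, as a braid on `a + b - 1` strands sharing one strand. -/
def connSum (a : ℕ) (w₁ w₂ : Word) : Word := w₁ ++ w₂.map fun l => (l.1 + (a - 1), l.2)

/-- The closure of `(p, w)` is a prime link: it is not the unknot and in every
connected-sum decomposition one factor is the unknot. -/
def IsPrime (p : ℕ) (w : Word) : Prop :=
  ¬ IsUnknot p w ∧
  ∀ a b : ℕ, ∀ w₁ w₂ : Word, 1 ≤ a → 1 ≤ b → WF a w₁ → WF b w₂ →
    MarkovEquiv (p, w) (a + b - 1, connSum a w₁ w₂) →
    IsUnknot a w₁ ∨ IsUnknot b w₂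

/-- The crossings on the boundary of each region of the standard (minimal) closure
diagram of `B_W(p,q)`. Crossings are labelled `(i,j)` with `i < q` (round, cyclic) and
`1 ≤ j ≤ p-1`; `Sum.inl` are the two outer `q`-gons, `Sum.inr (i,j)` is the region
`r^i_j` between rounds `i` and `i+1`. -/
def regionCrossings (p q : ℕ) : Bool ⊕ (ℕ × ℕ) → Finset (ℕ × ℕ)
  | .inl true => (Finset.range q).image fun i => (i, 1)
  | .inl false => (Finset.range q).image fun i => (i, p - 1)
  | .inr (i, j) =>
      ({(i, j), (i, j + 1), ((i + 1) % q, j - 1), ((i + 1) % q, j)} : Finset (ℕ × ℕ)) ∩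
        (Finset.range q ×ˢ Finset.Icc 1 (p - 1))

/-- Valid region labels of the standard diagram of `W(p,q)`. -/
def IsRegion (p q : ℕ) : Bool ⊕ (ℕ × ℕ) → Prop
  | .inl _ => True
  | .inr (i, j) => i < q ∧ 1 ≤ j ∧ j ≤ p - 1

/-- The isolate-region number of the minimal diagram of `W(p,q)`: the maximum number
of regions no two of which share a crossing. -/
noncomputable def isolateNumber (p q : ℕ) : ℕ :=
  sSup { m | ∃ S : Finset (Bool ⊕ (ℕ × ℕ)),
    (∀ r ∈ S, IsRegion p q r) ∧
    (S : Set (Bool ⊕ (ℕ × ℕ))).Pairwise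
      (fun r s => Disjoint (regionCrossings p q r) (regionCrossings p q s)) ∧
    S.card = m }


/-- Count of `j ∈ [1,n]` with `j % 4 = c`. -/
def cntN (n c : ℕ) : ℕ := ((Finset.Icc 1 n).filter (fun j => j % 4 = c)).card

lemma cntN_formula (n : ℕ) :
    cntN n 1 = (n + 3) / 4 ∧ cntN n 2 = (n + 2) / 4 ∧
    cntN n 3 = (n + 1) / 4 ∧ cntN n 0 = n / 4 := by
  induction n with
  | zero => simp [cntN]
  | succ n ih =>
    have hins : Finset.Icc 1 (n + 1) = insert (n + 1) (Finset.Icc 1 n) := by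
      ext x; simp [Finset.mem_Icc, Finset.mem_insert]; omega
    have key : ∀ c, cntN (n + 1) c =
        cntN n c + (if (n + 1) % 4 = c then 1 else 0) := by
      intro c
      unfold cntN
      rw [hins, Finset.filter_insert]
      by_cases h : (n + 1) % 4 = c
      · rw [if_pos h, if_pos h, Finset.card_insert_of_notMem (by simp)]
      · rw [if_neg h, if_neg h, Nat.add_zero]
    rw [key, key, key, key]
    obtain ⟨h1, h2, h3, h0⟩ := ih
    rw [h1, h2, h3, h0]
    split_ifs <;> omega

/-- The witnessing set of regions: `(i, j)` with `i < N`, `1 ≤ j ≤ p - 1`,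
`j ≡ i + 1 (mod 4)`. -/
def S0 (p N : ℕ) : Finset (ℕ × ℕ) :=
  (Finset.range N).biUnion fun i =>
    ((Finset.Icc 1 (p - 1)).filter fun j => j % 4 = (i + 1) % 4).image fun j => (i, j)

lemma mem_S0 (p N : ℕ) (i j : ℕ) :
    (i, j) ∈ S0 p N ↔ i < N ∧ 1 ≤ j ∧ j ≤ p - 1 ∧ j % 4 = (i + 1) % 4 := by
  simp only [S0, Finset.mem_biUnion, Finset.mem_image, Finset.mem_filter,
    Finset.mem_Icc, Finset.mem_range, Prod.mk.injEq]
  constructor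
  · rintro ⟨a, ha, b, ⟨⟨hb1, hb2⟩, hb3⟩, rfl, rfl⟩
    exact ⟨ha, hb1, hb2, hb3⟩
  · rintro ⟨h1, h2, h3, h4⟩
    exact ⟨i, h1, j, ⟨⟨h2, h3⟩, h4⟩, rfl, rfl⟩

lemma card_S0 (p N : ℕ) :
    (S0 p N).card = ∑ i ∈ Finset.range N, cntN (p - 1) ((i + 1) % 4) := by
  unfold S0
  rw [Finset.card_biUnion]
  · refine Finset.sum_congr rfl fun i _ => ?_
    rw [Finset.card_image_of_injective _ (fun a b h => (Prod.ext_iff.mp h).2)]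
    rfl
  · intro x _ y _ hxy
    rw [Function.onFun, Finset.disjoint_left]
    rintro ⟨a, b⟩ ha hb
    simp only [Finset.mem_image, Finset.mem_filter, Prod.mk.injEq] at ha hb
    obtain ⟨_, _, rfl, _⟩ := ha
    obtain ⟨_, _, rfl, _⟩ := hb
    exact hxy rfl

lemma sum_cntN_4k (n k : ℕ) :
    ∑ i ∈ Finset.range (4 * k), cntN n ((i + 1) % 4) = n * k := by
  induction k with
  | zero => simp
  | succ k ih =>
    have h4 : 4 * (k + 1) = 4 * k + 1 + 1 + 1 + 1 := by ring
    rw [h4, Finset.sum_range_succ, Finset.sum_range_succ, Finset.sum_range_succ,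
      Finset.sum_range_succ, ih]
    have e1 : (4 * k + 1) % 4 = 1 := by omega
    have e2 : (4 * k + 1 + 1) % 4 = 2 := by omega
    have e3 : (4 * k + 1 + 1 + 1) % 4 = 3 := by omega
    have e4 : (4 * k + 1 + 1 + 1 + 1) % 4 = 0 := by omega
    have e0 : (4 * k + 1 + 1 + 1) + 1 = 4 * k + 1 + 1 + 1 + 1 := rfl
    rw [show 4 * k + 1 = 4 * k + 1 from rfl]
    rw [e1, show (4 * k + 1 + 1) % 4 = 2 from e2, show (4 * k + 1 + 1 + 1) % 4 = 3 from e3,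
      show (4 * k + 1 + 1 + 1 + 1) % 4 = 0 from e4]
    obtain ⟨h1, h2, h3, h0⟩ := cntN_formula n
    rw [h1, h2, h3, h0, Nat.mul_succ]
    omega

lemma S0_disjoint (p q N : ℕ) (hN : N ≤ q) (hN0 : N = q → q % 4 = 0)
    {i j i' j' : ℕ} (h1 : (i, j) ∈ S0 p N) (h2 : (i', j') ∈ S0 p N)
    (hne : (i, j) ≠ (i', j')) :
    Disjoint (regionCrossings p q (.inr (i, j))) (regionCrossings p q (.inr (i', j'))) := by
  rw [mem_S0] at h1 h2
  obtain ⟨hi, hj1, hj2, hj4⟩ := h1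
  obtain ⟨hi', hj1', hj2', hj4'⟩ := h2
  have hne' : ¬(i = i' ∧ j = j') := by
    intro ⟨h, h'⟩; exact hne (by rw [h, h'])
  rw [Finset.disjoint_left]
  rintro ⟨a, b⟩ hab hab'
  simp only [regionCrossings, Finset.mem_inter, Finset.mem_insert, Finset.mem_singleton,
    Finset.mem_product, Finset.mem_range, Finset.mem_Icc, Prod.mk.injEq] at hab hab'
  have hmv : (i + 1) % q = i + 1 ∨ ((i + 1) % q = 0 ∧ i + 1 = q) := by
    rcases Nat.lt_or_ge (i + 1) q with h | h
    · exact Or.inl (Nat.mod_eq_of_lt h)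
    · have h1 : i + 1 = q := by omega
      exact Or.inr ⟨by rw [h1, Nat.mod_self], h1⟩
  have hmv' : (i' + 1) % q = i' + 1 ∨ ((i' + 1) % q = 0 ∧ i' + 1 = q) := by
    rcases Nat.lt_or_ge (i' + 1) q with h | h
    · exact Or.inl (Nat.mod_eq_of_lt h)
    · have h1 : i' + 1 = q := by omega
      exact Or.inr ⟨by rw [h1, Nat.mod_self], h1⟩
  rcases hmv with h | ⟨h, he⟩ <;> rcases hmv' with h' | ⟨h', he'⟩ <;>
    rw [h] at hab <;> rw [h'] at hab' <;> omega

lemma bdd_isolate (p q : ℕ) :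
    BddAbove { m | ∃ S : Finset (Bool ⊕ (ℕ × ℕ)),
      (∀ r ∈ S, IsRegion p q r) ∧
      (S : Set (Bool ⊕ (ℕ × ℕ))).Pairwise
        (fun r s => Disjoint (regionCrossings p q r) (regionCrossings p q s)) ∧
      S.card = m } := by
  refine ⟨(((Finset.range q ×ˢ Finset.Icc 1 (p - 1)).image Sum.inr) ∪
    {Sum.inl true, Sum.inl false}).card, ?_⟩
  rintro m ⟨S, hreg, _, rfl⟩
  apply Finset.card_le_card
  intro r hr
  have := hreg r hr
  rcases r with b | ⟨i, j⟩
  · cases b <;> simp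
  · obtain ⟨h1, h2, h3⟩ := this
    simp only [Finset.mem_union, Finset.mem_image, Finset.mem_product, Finset.mem_range,
      Finset.mem_Icc]
    exact Or.inl ⟨(i, j), ⟨h1, h2, h3⟩, rfl⟩

lemma S0_le_isolate (p q N : ℕ) (hN : N ≤ q) (hN0 : N = q → q % 4 = 0) :
    (S0 p N).card ≤ isolateNumber p q := by
  apply le_csSup (bdd_isolate p q)
  refine ⟨(S0 p N).image Sum.inr, ?_, ?_, ?_⟩
  · rintro r hr
    simp only [Finset.mem_image] at hr
    obtain ⟨⟨i, j⟩, hij, rfl⟩ := hr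
    rw [mem_S0] at hij
    exact ⟨lt_of_lt_of_le hij.1 hN, hij.2.1, hij.2.2.1⟩
  · intro x hx y hy hxy
    simp only [Finset.coe_image, Set.mem_image, Finset.mem_coe] at hx hy
    obtain ⟨⟨i, j⟩, hij, rfl⟩ := hx
    obtain ⟨⟨i', j'⟩, hij', rfl⟩ := hy
    have hne : (i, j) ≠ (i', j') := fun h => hxy (by rw [h])
    exact S0_disjoint p q N hN hN0 hij hij' hne
  · exact Finset.card_image_of_injective _ Sum.inr_injective

/-- Lower bounds for the isolate-region number of the minimal diagram of `W(p,q)`. -/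
theorem isolateNumber_weaving_lower (p q : ℕ) (hp : 3 ≤ p) (hq : 2 ≤ q) :
    (q % 4 = 0 → (p - 1) * q / 4 ≤ isolateNumber p q) ∧
    (q % 4 = 1 → (p - 1) * (q - 1) / 4 ≤ isolateNumber p q) ∧
    (q % 4 = 2 → (p - 1) * (q - 2) / 4 + (p + 2) / 4 ≤ isolateNumber p q) ∧
    (q % 4 = 3 → (p - 1) * (q - 3) / 4 + (p + 2) / 4 + (p + 1) / 4 ≤ isolateNumber p q) := by
  obtain ⟨h1, h2, h3, h0⟩ := cntN_formula (p - 1)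
  refine ⟨?_, ?_, ?_, ?_⟩ <;> intro hmod
  · -- q % 4 = 0, take N = q = 4 * (q / 4)
    have hle := S0_le_isolate p q (4 * (q / 4)) (by omega) (by omega)
    rw [card_S0, sum_cntN_4k] at hle
    have : (p - 1) * q / 4 = (p - 1) * (q / 4) := by
      rw [Nat.mul_div_assoc _ (by omega : 4 ∣ q)]
    omega
  · have hle := S0_le_isolate p q (4 * ((q - 1) / 4)) (by omega) (by omega)
    rw [card_S0, sum_cntN_4k] at hle
    have : (p - 1) * (q - 1) / 4 = (p - 1) * ((q - 1) / 4) := by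
      rw [Nat.mul_div_assoc _ (by omega : 4 ∣ (q - 1))]
    omega
  · have hle := S0_le_isolate p q (4 * ((q - 2) / 4) + 1) (by omega) (by omega)
    rw [card_S0, Finset.sum_range_succ, sum_cntN_4k,
      show (4 * ((q - 2) / 4) + 1) % 4 = 1 from by omega, h1] at hle
    have : (p - 1) * (q - 2) / 4 = (p - 1) * ((q - 2) / 4) := by
      rw [Nat.mul_div_assoc _ (by omega : 4 ∣ (q - 2))]
    omega
  · have hle := S0_le_isolate p q (4 * ((q - 3) / 4) + 1 + 1) (by omega) (by omega)
    rw [card_S0, Finset.sum_range_succ, Finset.sum_range_succ, sum_cntN_4k,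
      show (4 * ((q - 3) / 4) + 1) % 4 = 1 from by omega,
      show (4 * ((q - 3) / 4) + 1 + 1) % 4 = 2 from by omega, h1, h2] at hle
    have : (p - 1) * (q - 3) / 4 = (p - 1) * ((q - 3) / 4) := by
      rw [Nat.mul_div_assoc _ (by omega : 4 ∣ (q - 3))]
    omega

end Weaving
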